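/- arXiv:2602.01214 — 2 statements merged into one kernel-verified Lean document; each statement's English description precedes it below -/
import Mathlib

section
/- For every r ≥ 1, p, k ∈ ℤ, every α ∈ Z_r^{p,k}, and every choice of witnesses z_{p+1}, …, z_{p+r−1} as in the definition of Z_r^{p,k}, there exist harmonic elements ω̄_{p+i} ∈ ker d_0 ∩ ker d_0* ∩ H_{p+i,k−p−i} for i = 1, …, r−1, satisfying d_c^j(Π_0 α) = ∑_{i=1}^{j−1} d_c^i(ω̄_{p+j−i}) for all j = 1, …, r−1, such that (d_r α − ∑_{i=1}^{r−1} d_{r−i} z_{p+i}) − (d_c^r(Π_0 α) − ∑_{i=2}^{r−1} d_c^i(ω̄_{p+r−i})) ∈ B_r^{p+r,k+1}. In other words, the r-th spectral sequence differential applied to the class of α is represented by d_c^r(Π_0 α) − ∑_{i=2}^{r−1} d_c^i(ω̄_{p+r−i}). -/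
/-!
Encode `α ∈ Z_r` and its witnesses as the sequence `u = (α, -z₁, …, -z_{r-1}, 0, …)`. The
defining relations say that the convolution `D ⋆ u` vanishes in degrees `< r` (`u` is a
zigzag), and the multicomplex condition is `D ⋆ D = 0`. So `u - D ⋆ b` is again a zigzag for
every `b`, and its `r`-th differential `D⁺ ⋆ (u - D ⋆ b)`, where `D⁺` is `D` with `D₀` replaced
by `0`, differs from that of `u` by the `d₀`-exact term `-d₀ (D ⋆ b)_r`.

The recursion for `∂_r` says `∂ = (1 + D⁺ g)⁻¹ D⁺` as formal power series. For
`e = u - ∂ ⋆ g u`, the gauge `b = g e` turns `u` into the zigzag `v = e - d₀ g e`, which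
satisfies `g v = 0`, and `W = v + g (D⁺ ⋆ v)` satisfies `D⁺ ⋆ v = ∂ ⋆ W`. In degrees `m < r`
the zigzag relation reads `(D⁺ ⋆ v)_m = -d₀ v_m`, so `W_m = Π₀ v_m` is harmonic and
`Π₀ (∂ ⋆ W)_m = 0`: these are the relations `d_c^j (Π₀ α) = ∑ d_c^i ω̄` for `ω̄ = -W`. In
degree `r`, `(D⁺ ⋆ v)_r` is a `d₀`-cycle, hence equal to `Π₀ (∂ ⋆ W)_r` up to a `d₀`-boundary,
and the term `d_c^1 ω̄` missing from the representative lies in `B_r` because `ω̄` is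
`d₀`-closed.
-/

open scoped InnerProductSpace

/-- `α ∈ B_r^{p,k}` for the spectral sequence of a multicomplex of Hilbert spaces. -/
def MemB {H : Type*} [NormedAddCommGroup H] [InnerProductSpace ℝ H]
    (Hgr : ℤ × ℤ → Submodule ℝ H) (D : ℕ → H →L[ℝ] H)
    (r : ℕ) (p k : ℤ) (α : H) : Prop :=
  α ∈ Hgr (p, k - p) ∧
    ∃ c : ℕ → H,
      (∀ i : ℕ, i ≤ r - 1 → c i ∈ Hgr (p - (i : ℤ), k - 1 - p + (i : ℤ))) ∧
      α = ∑ i ∈ Finset.range r, D i (c i) ∧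
      (∀ l : ℕ, 1 ≤ l → l ≤ r - 1 → ∑ i ∈ Finset.Icc l (r - 1), D (i - l) (c i) = 0)

open Finset Function

namespace Multicomplex

section Convolution

variable {R E : Type*} [Ring R] [AddCommGroup E] [TopologicalSpace E] [Module R E]

def convolve (F : ℕ → E →L[R] E) (w : ℕ → E) (n : ℕ) : E :=
  ∑ i ∈ range (n + 1), F i (w (n - i))

def compConv [ContinuousAdd E] (F G : ℕ → E →L[R] E) (n : ℕ) : E →L[R] E :=
  ∑ i ∈ range (n + 1), (F i).comp (G (n - i))

variable {F G : ℕ → E →L[R] E}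

lemma sum_Ico_one_sub {M : Type*} [AddCommMonoid M] (f : ℕ → M) (n : ℕ) :
    ∑ i ∈ Ico 1 n, f (n - i) = ∑ i ∈ Ico 1 n, f i := by
  rw [sum_Ico_reflect f 1 (Nat.le_succ n), Nat.add_sub_cancel_left, Nat.add_sub_cancel]

lemma convolve_sub_left [IsTopologicalAddGroup E] (F G : ℕ → E →L[R] E) (w : ℕ → E) :
    convolve (F - G) w = convolve F w - convolve G w := by
  ext n; simp [convolve, sum_sub_distrib]

lemma convolve_add_right (F : ℕ → E →L[R] E) (v w : ℕ → E) :
    convolve F (v + w) = convolve F v + convolve F w := by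
  ext n; simp [convolve, sum_add_distrib]

lemma convolve_sub_right (F : ℕ → E →L[R] E) (v w : ℕ → E) :
    convolve F (v - w) = convolve F v - convolve F w := by
  ext n; simp [convolve, sum_sub_distrib]

lemma convolve_comp_right (F : ℕ → E →L[R] E) (f : E →L[R] E) (w : ℕ → E) :
    convolve F (f ∘ w) = convolve (fun i => (F i).comp f) w := rfl

lemma convolve_convolve [ContinuousAdd E] (F G : ℕ → E →L[R] E) (w : ℕ → E) :
    convolve F (convolve G w) = convolve (compConv F G) w := by
  ext n
  have h := sum_range_diag_flip (n + 1) fun i j => F i (G j (w (n - (i + j))))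
  simp only [convolve, compConv, _root_.sum_apply, ContinuousLinearMap.coe_comp, comp_apply,
    map_sum]
  rw [sum_congr rfl fun m hm => sum_congr rfl fun k hk => by
    rw [Nat.add_sub_cancel' (by simp at hk; omega)]] at h
  rw [h]
  refine sum_congr rfl fun i hi => sum_congr (by simp at hi; congr 1; omega) fun j _ => ?_
  rw [Nat.sub_sub]

lemma convolve_eq_add_update_zero (F : ℕ → E →L[R] E) (w : ℕ → E) (n : ℕ) :
    convolve F w n = F 0 (w n) + convolve (update F 0 0) w n := by
  simp only [convolve, sum_range_succ', update_apply, Nat.succ_ne_zero, if_false,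
    if_true, zero_apply, add_zero, Nat.sub_zero]
  exact add_comm _ _

lemma convolve_update_zero_of_pos (F : ℕ → E →L[R] E) (w : ℕ → E) {n : ℕ} (hn : 1 ≤ n) :
    convolve (update F 0 0) w n = F n (w 0) + ∑ i ∈ Ico 1 n, F i (w (n - i)) := by
  rw [convolve, range_eq_Ico, sum_eq_sum_Ico_succ_bot (Nat.succ_pos n), sum_Ico_succ_top hn,
    Nat.sub_self]
  simp only [update_self, zero_apply, zero_add]
  rw [add_comm, update_of_ne (by omega)]
  exact congrArg₂ _ rfl (sum_congr rfl fun i hi => by rw [update_of_ne (by simp at hi; omega)])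

lemma convolve_congr_of_lt {v w : ℕ → E} {n : ℕ} (hF : F 0 = 0) (h : ∀ m < n, v m = w m) :
    convolve F v n = convolve F w n := by
  refine sum_congr rfl fun i hi => ?_
  rcases Nat.eq_zero_or_pos i with rfl | hi0
  · simp [hF]
  · rw [h _ (by simp at hi; omega)]

lemma eq_of_add_convolve_eq {v w : ℕ → E} (hF : F 0 = 0)
    (h : ∀ n, v n + convolve F v n = w n + convolve F w n) : v = w := by
  ext n
  induction n using Nat.strong_induction_on with
  | _ n ih =>
    have := h n
    rwa [convolve_congr_of_lt hF ih, add_left_inj] at this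

variable [IsTopologicalAddGroup E] {K Q D : ℕ → E →L[R] E} {g : E →L[R] E}

/-- `Q = (1 + K g)⁻¹ K` as formal power series; for `K = update D 0 0` this is the recursion
defining the `∂_r`. -/
def IsResolvent (K : ℕ → E →L[R] E) (g : E →L[R] E) (Q : ℕ → E →L[R] E) : Prop :=
  Q = K - compConv K fun i => g.comp (Q i)

lemma convolve_resolvent (hQ : IsResolvent K g Q) (w : ℕ → E) :
    convolve Q w + convolve K (g ∘ convolve Q w) = convolve K w := by
  have hassoc : compConv (fun i => (K i).comp g) Q = compConv K fun i => g.comp (Q i) := rfl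
  conv_lhs => rw [convolve_comp_right, convolve_convolve, hassoc]
  nth_rw 1 [show Q = _ from hQ]
  rw [convolve_sub_left, sub_add_cancel]

lemma eq_convolve_of_resolvent (hK : K 0 = 0) (hQ : IsResolvent K g Q)
    {T W : ℕ → E} (hT : T + convolve K (g ∘ T) = convolve K W) : T = convolve Q W := by
  refine eq_of_add_convolve_eq (F := fun i => (K i).comp g) (by simp [hK]) fun n => ?_
  exact congrFun (hT.trans (convolve_resolvent hQ W).symm) n

lemma isResolvent_update {P : ℕ → E →L[R] E} (hP1 : P 1 = D 1)
    (hPrec : ∀ r : ℕ, 2 ≤ r →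
      P r = D r - ∑ j ∈ Ico 1 r, (D (r - j)).comp (g.comp (P j))) :
    IsResolvent (update D 0 0) g (update P 0 0) := by
  refine funext fun n => ?_
  rcases Nat.eq_zero_or_pos n with rfl | hn
  · simp [compConv]
  have hsum : compConv (update D 0 0) (fun i => g.comp (update P 0 0 i)) n
      = ∑ j ∈ Ico 1 n, (D (n - j)).comp (g.comp (P j)) := by
    rw [compConv, range_eq_Ico, sum_eq_sum_Ico_succ_bot (Nat.succ_pos n), sum_Ico_succ_top hn,
      Nat.sub_self, ← sum_Ico_one_sub]
    simp only [update_self, ContinuousLinearMap.zero_comp, ContinuousLinearMap.comp_zero,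
      zero_add, add_zero]
    refine sum_congr rfl fun i hi => ?_
    simp only [mem_Ico] at hi
    rw [update_of_ne (by omega), update_of_ne (by omega), Nat.sub_sub_self hi.2.le]
  rw [Pi.sub_apply, hsum, update_of_ne hn.ne', update_of_ne hn.ne']
  rcases (show n = 1 ∨ 2 ≤ n by omega) with rfl | hn2
  · simp [hP1]
  · exact hPrec n hn2

end Convolution

section Zigzag

variable {R E : Type*} [Ring R] [AddCommGroup E] [TopologicalSpace E] [IsTopologicalAddGroup E]
  [Module R E] {D Q : ℕ → E →L[R] E} {g : E →L[R] E} {N : ℕ} {u w : ℕ → E}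

def IsZigzag (D : ℕ → E →L[R] E) (N : ℕ) (w : ℕ → E) : Prop :=
  ∀ n ≤ N, convolve D w n = 0

lemma convolve_convolve_self (hD : ∀ n, compConv D D n = 0) (w : ℕ → E) :
    convolve D (convolve D w) = 0 := by
  rw [convolve_convolve]; ext n; simp [convolve, hD]

lemma update_convolve_convolve_self (hD : ∀ n, compConv D D n = 0) (w : ℕ → E) (n : ℕ) :
    convolve (update D 0 0) (convolve D w) n = -D 0 (convolve D w n) := by
  have h := convolve_eq_add_update_zero D (convolve D w) n
  rw [convolve_convolve_self hD] at h
  exact (neg_eq_of_add_eq_zero_right h.symm).symm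

lemma apply_zero_apply_zero (hD : ∀ n, compConv D D n = 0) (x : E) : D 0 (D 0 x) = 0 := by
  simpa [compConv] using congrArg (· x) (hD 0)

lemma apply_zero_apply_one (hD : ∀ n, compConv D D n = 0) (x : E) :
    D 0 (D 1 x) = -D 1 (D 0 x) := by
  have h := congrArg (· x) (hD 1)
  simp only [compConv, sum_range_succ, sum_range_zero, zero_add] at h
  simpa [eq_neg_iff_add_eq_zero] using h

lemma IsZigzag.sub_convolve (hw : IsZigzag D N w) (hD : ∀ n, compConv D D n = 0) (b : ℕ → E) :
    IsZigzag D N (w - convolve D b) := fun n hn => by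
  rw [convolve_sub_right, convolve_convolve_self hD, Pi.sub_apply, hw n hn]; simp

lemma IsZigzag.apply_convolve_update_zero (hw : IsZigzag D N w) (hD : ∀ n, compConv D D n = 0)
    {n : ℕ} (hn : n ≤ N + 1) : D 0 (convolve (update D 0 0) w n) = 0 := by
  have h := update_convolve_convolve_self hD w n
  rw [convolve_congr_of_lt (w := 0) (by simp) fun m hm => hw m (by omega)] at h
  have hcyc : D 0 (convolve D w n) = 0 := by simpa [convolve] using h.symm
  rwa [convolve_eq_add_update_zero, map_add, apply_zero_apply_zero hD, zero_add] at hcyc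

def gauge (Q : ℕ → E →L[R] E) (g : E →L[R] E) (u : ℕ → E) : ℕ → E :=
  g ∘ (u - convolve Q (g ∘ u))

def normalize (D Q : ℕ → E →L[R] E) (g : E →L[R] E) (u : ℕ → E) : ℕ → E :=
  u - convolve D (gauge Q g u)

def harmonicPart (D Q : ℕ → E →L[R] E) (g : E →L[R] E) (u : ℕ → E) : ℕ → E :=
  normalize D Q g u + g ∘ convolve (update D 0 0) (normalize D Q g u)

lemma normalize_eq (hQ : IsResolvent (update D 0 0) g Q) (u : ℕ → E) :
    normalize D Q g u = (u - convolve Q (g ∘ u)) - D 0 ∘ gauge Q g u := by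
  set e := u - convolve Q (g ∘ u)
  have hcomp : g ∘ e = g ∘ u - g ∘ convolve Q (g ∘ u) := by ext m; simp [e]
  have hK : convolve (update D 0 0) (g ∘ e) = u - e := by
    rw [hcomp, convolve_sub_right, ← convolve_resolvent hQ]; simp [e]
  show u - convolve D (g ∘ e) = e - D 0 ∘ g ∘ e
  ext m
  rw [Pi.sub_apply, convolve_eq_add_update_zero, hK]
  simp only [Pi.sub_apply, comp_apply]
  abel

lemma resolvent_zero (hQ : IsResolvent (update D 0 0) g Q) : Q 0 = 0 := by
  rw [show Q = _ from hQ]; simp [compConv]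

lemma convolve_normalize (hQ : IsResolvent (update D 0 0) g Q) (u : ℕ → E) :
    convolve (update D 0 0) (normalize D Q g u) = convolve Q (harmonicPart D Q g u) :=
  eq_convolve_of_resolvent (update_self ..) hQ (by rw [harmonicPart, convolve_add_right])

lemma IsZigzag.normalize (hu : IsZigzag D N u) (hD : ∀ n, compConv D D n = 0) :
    IsZigzag D N (normalize D Q g u) :=
  hu.sub_convolve hD _

lemma convolve_sub_convolve_normalize (hD : ∀ n, compConv D D n = 0) (u : ℕ → E) (n : ℕ) :
    convolve (update D 0 0) u n - convolve (update D 0 0) (normalize D Q g u) n =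
      -D 0 (convolve D (gauge Q g u) n) := by
  rw [← Pi.sub_apply, ← convolve_sub_right, normalize, sub_sub_cancel,
    update_convolve_convolve_self hD]

end Zigzag

section Grading

variable {R E : Type*} [Ring R] [AddCommGroup E] [Module R E] (Hgr : ℤ × ℤ → Submodule R E)

def MapsGraded [TopologicalSpace E] (i j : ℤ) (f : E →L[R] E) : Prop :=
  ∀ a b, ∀ x ∈ Hgr (a, b), f x ∈ Hgr (a + i, b + j)

def IsGradedSeq (p b : ℤ) (w : ℕ → E) : Prop :=
  ∀ m : ℕ, w m ∈ Hgr (p + m, b - m)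

variable {Hgr} {p b t : ℤ} {v w : ℕ → E}

lemma mem_grade_of_eq {x : E} {a b a' b' : ℤ} (hx : x ∈ Hgr (a, b)) (ha : a = a')
    (hb : b = b') : x ∈ Hgr (a', b') :=
  ha ▸ hb ▸ hx

lemma IsGradedSeq.sub (hv : IsGradedSeq Hgr p b v) (hw : IsGradedSeq Hgr p b w) :
    IsGradedSeq Hgr p b (v - w) := fun m => sub_mem (hv m) (hw m)

lemma IsGradedSeq.add (hv : IsGradedSeq Hgr p b v) (hw : IsGradedSeq Hgr p b w) :
    IsGradedSeq Hgr p b (v + w) := fun m => add_mem (hv m) (hw m)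

variable [TopologicalSpace E] {i j i' j' : ℤ} {f f' : E →L[R] E}

lemma MapsGraded.comp (hf : MapsGraded Hgr i j f) (hf' : MapsGraded Hgr i' j' f') :
    MapsGraded Hgr (i + i') (j + j') (f'.comp f) := fun a b x hx => by
  simpa [add_assoc] using hf' _ _ _ (hf a b x hx)

lemma mapsGraded_zero : MapsGraded Hgr i j (0 : E →L[R] E) := fun _ _ _ _ => zero_mem _

lemma update_zero_mapsGraded {F : ℕ → E →L[R] E}
    (hF : ∀ n : ℕ, MapsGraded Hgr n (t - n) (F n)) (n : ℕ) :
    MapsGraded Hgr n (t - n) (update F 0 0 n) := by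
  rcases eq_or_ne n 0 with rfl | hn
  · simpa using mapsGraded_zero
  · simpa [hn] using hF n

lemma IsGradedSeq.map (hw : IsGradedSeq Hgr p b w) (hf : MapsGraded Hgr 0 t f) :
    IsGradedSeq Hgr p (b + t) (f ∘ w) := fun m => by
  simpa [sub_add_eq_add_sub] using hf _ _ _ (hw m)

lemma IsGradedSeq.convolve {F : ℕ → E →L[R] E} (hw : IsGradedSeq Hgr p b w)
    (hF : ∀ n : ℕ, MapsGraded Hgr n (t - n) (F n)) : IsGradedSeq Hgr p (b + t) (convolve F w) :=
  fun m => sum_mem fun n hn => by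
    have hnm : n ≤ m := Nat.lt_succ_iff.mp (mem_range.mp hn)
    exact mem_grade_of_eq (hF n _ _ _ (hw (m - n))) (by push_cast [hnm]; ring)
      (by push_cast [hnm]; ring)

lemma compConv_mapsGraded [ContinuousAdd E] {F G : ℕ → E →L[R] E} {s : ℤ} {n : ℕ}
    (hF0 : F 0 = 0) (hF : ∀ i : ℕ, MapsGraded Hgr i (s - i) (F i))
    (hG : ∀ i < n, MapsGraded Hgr i (t - i) (G i)) :
    MapsGraded Hgr n (s + t - n) (compConv F G n) := fun a b x hx => by
  simp only [compConv, _root_.sum_apply]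
  refine sum_mem fun i hi => ?_
  have hin : i ≤ n := Nat.lt_succ_iff.mp (mem_range.mp hi)
  rcases Nat.eq_zero_or_pos i with rfl | hi0
  · simp [hF0]
  · exact mem_grade_of_eq ((hG (n - i) (by omega)).comp (hF i) a b x hx)
      (by push_cast [hin]; ring) (by push_cast [hin]; ring)

lemma resolvent_mapsGraded [IsTopologicalAddGroup E] {K Q : ℕ → E →L[R] E} {g : E →L[R] E}
    (hQ : IsResolvent K g Q) (hK0 : K 0 = 0)
    (hK : ∀ n : ℕ, MapsGraded Hgr n (1 - n) (K n)) (hg : MapsGraded Hgr 0 (-1) g) (n : ℕ) :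
    MapsGraded Hgr n (1 - n) (Q n) := by
  induction n using Nat.strong_induction_on with
  | _ n ih =>
    have hgQ : ∀ i < n, MapsGraded Hgr i (0 - i) (g.comp (Q i)) := fun i hi a b x hx =>
      mem_grade_of_eq ((ih i hi).comp hg a b x hx) (by ring) (by ring)
    have hconv := compConv_mapsGraded hK0 hK hgQ
    rw [show Q = _ from hQ]
    exact fun a b x hx => sub_mem (hK n a b x hx) (by simpa using hconv a b x hx)

end Grading

section PartialInverse

variable {H : Type*} [NormedAddCommGroup H] [InnerProductSpace ℝ H] {d g : H →L[ℝ] H}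

structure IsPartialInverse (d g : H →L[ℝ] H) : Prop where
  sub_d_apply_mem : ∀ x, x - d (g x) ∈ (LinearMap.range (d : H →ₗ[ℝ] H))ᗮ
  apply_d_mem : ∀ x, g (d x) ∈ (LinearMap.ker (d : H →ₗ[ℝ] H))ᗮ
  apply_eq_zero : ∀ x ∈ (LinearMap.range (d : H →ₗ[ℝ] H))ᗮ, g x = 0

def harmonicProj (d g : H →L[ℝ] H) : H →L[ℝ] H := 1 - g.comp d - d.comp g

lemma harmonicProj_apply (x : H) : harmonicProj d g x = x - g (d x) - d (g x) := rfl

lemma harmonicProj_of_d_eq_zero {x : H} (hx : d x = 0) : harmonicProj d g x = x - d (g x) := by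
  simp [harmonicProj_apply, hx]

namespace IsPartialInverse

/-- `d x - d (g (d x))` lies both in the range of `d` and in its orthogonal complement. -/
lemma d_g_d (hg : IsPartialInverse d g) (x : H) : d (g (d x)) = d x := by
  have hmem : d x - d (g (d x)) ∈ LinearMap.range (d : H →ₗ[ℝ] H) ⊓ _ :=
    ⟨⟨x - g (d x), by simp⟩, hg.sub_d_apply_mem (d x)⟩
  rw [Submodule.inf_orthogonal_eq_bot, Submodule.mem_bot, sub_eq_zero] at hmem
  exact hmem.symm

lemma g_sub_d_g (hg : IsPartialInverse d g) (x : H) : g (x - d (g x)) = 0 :=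
  hg.apply_eq_zero _ (hg.sub_d_apply_mem x)

lemma d_harmonicProj (hg : IsPartialInverse d g) (hdd : ∀ x, d (d x) = 0) (x : H) :
    d (harmonicProj d g x) = 0 := by
  simp [harmonicProj_apply, hg.d_g_d, hdd]

lemma harmonicProj_d (hg : IsPartialInverse d g) (hdd : ∀ x, d (d x) = 0) (x : H) :
    harmonicProj d g (d x) = 0 := by
  simp [harmonicProj_apply, hg.d_g_d, hdd]

lemma adjoint_harmonicProj [CompleteSpace H] (hg : IsPartialInverse d g)
    (hdd : ∀ x, d (d x) = 0) (x : H) :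
    ContinuousLinearMap.adjoint d (harmonicProj d g x) = 0 := by
  have hle : LinearMap.range (d : H →ₗ[ℝ] H) ≤ LinearMap.ker (d : H →ₗ[ℝ] H) := by
    rintro _ ⟨y, rfl⟩; exact hdd y
  have hmem : harmonicProj d g x ∈ (LinearMap.range (d : H →ₗ[ℝ] H))ᗮ := by
    rw [harmonicProj_apply, sub_right_comm]
    exact sub_mem (hg.sub_d_apply_mem x) (Submodule.orthogonal_le hle (hg.apply_d_mem x))
  rwa [ContinuousLinearMap.orthogonal_range] at hmem

end IsPartialInverse

end PartialInverse

section SpectralBoundaries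

variable {H : Type*} [NormedAddCommGroup H] [InnerProductSpace ℝ H]
  {Hgr : ℤ × ℤ → Submodule ℝ H} {D : ℕ → H →L[ℝ] H} {r : ℕ} {p k : ℤ}

lemma MemB.add {x y : H} (hx : MemB Hgr D r p k x) (hy : MemB Hgr D r p k y) :
    MemB Hgr D r p k (x + y) := by
  obtain ⟨hx, c, hc, rfl, hcl⟩ := hx
  obtain ⟨hy, c', hc', rfl, hcl'⟩ := hy
  refine ⟨add_mem hx hy, c + c', fun i hi => add_mem (hc i hi) (hc' i hi), ?_,
    fun l h1 h2 => ?_⟩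
  · simp [sum_add_distrib]
  · simp [sum_add_distrib, hcl l h1 h2, hcl' l h1 h2]

lemma memB_apply_zero (hD : ∀ i : ℕ, MapsGraded Hgr i (1 - i) (D i)) (hr : 1 ≤ r) {c : H}
    (hc : c ∈ Hgr (p, k - 1 - p)) : MemB Hgr D r p k (D 0 c) := by
  refine ⟨mem_grade_of_eq (hD 0 _ _ _ hc) (by simp) (by push_cast; ring), Pi.single 0 c,
    fun i _ => ?_, ?_, fun l hl _ => ?_⟩
  · rcases eq_or_ne i 0 with rfl | hi
    · simpa using hc
    · simp [hi]
  · rw [sum_eq_single_of_mem 0 (by simp; omega) fun i _ hi => by simp [hi]]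
    simp
  · exact sum_eq_zero fun i hi => by simp [show i ≠ 0 by simp at hi; omega]

lemma memB_apply_one (hD : ∀ i : ℕ, MapsGraded Hgr i (1 - i) (D i)) (hr : 2 ≤ r) {c : H}
    (hc : c ∈ Hgr (p - 1, k - p)) (hc0 : D 0 c = 0) : MemB Hgr D r p k (D 1 c) := by
  refine ⟨mem_grade_of_eq (hD 1 _ _ _ hc) (by push_cast; ring) (by push_cast; ring),
    Pi.single 1 c, fun i _ => ?_, ?_, fun l hl _ => ?_⟩
  · rcases eq_or_ne i 1 with rfl | hi
    · rw [Pi.single_eq_same]; exact mem_grade_of_eq hc (by simp) (by push_cast; ring)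
    · simp [hi]
  · rw [sum_eq_single_of_mem 1 (by simp; omega) fun i _ hi => by simp [hi]]
    simp
  · refine sum_eq_zero fun i hi => ?_
    rcases eq_or_ne i 1 with rfl | hi1
    · simp [show 1 - l = 0 by omega, hc0]
    · simp [hi1]

end SpectralBoundaries

section NormalForm

variable {H : Type*} [NormedAddCommGroup H] [InnerProductSpace ℝ H]
  {D Q : ℕ → H →L[ℝ] H} {g : H →L[ℝ] H} {N : ℕ} {u : ℕ → H}

lemma g_normalize (hQ : IsResolvent (update D 0 0) g Q)
    (hg : IsPartialInverse (D 0) g) (m : ℕ) : g (normalize D Q g u m) = 0 := by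
  rw [normalize_eq hQ]
  exact hg.g_sub_d_g _

lemma harmonicPart_zero (hQ : IsResolvent (update D 0 0) g Q)
    (hu0 : D 0 (u 0) = 0) : harmonicPart D Q g u 0 = harmonicProj (D 0) g (u 0) := by
  simp [harmonicPart, normalize_eq hQ, convolve, gauge, resolvent_zero hQ,
    harmonicProj_of_d_eq_zero hu0]

lemma harmonicPart_eq_harmonicProj
    (hQ : IsResolvent (update D 0 0) g Q)
    (hg : IsPartialInverse (D 0) g) (hD : ∀ n, compConv D D n = 0) (hu : IsZigzag D N u)
    {m : ℕ} (hm : m ≤ N) :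
    harmonicPart D Q g u m = harmonicProj (D 0) g (normalize D Q g u m) := by
  have h := (hu.normalize (Q := Q) (g := g) hD) m hm
  rw [convolve_eq_add_update_zero] at h
  rw [harmonicPart, Pi.add_apply, comp_apply, eq_neg_of_add_eq_zero_right h, harmonicProj_apply,
    g_normalize hQ hg, map_zero, sub_zero, map_neg, sub_eq_add_neg]

lemma harmonicPart_isHarmonic [CompleteSpace H]
    (hQ : IsResolvent (update D 0 0) g Q)
    (hg : IsPartialInverse (D 0) g) (hD : ∀ n, compConv D D n = 0) (hu : IsZigzag D N u)
    {m : ℕ} (hm : m ≤ N) :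
    D 0 (harmonicPart D Q g u m) = 0 ∧
      ContinuousLinearMap.adjoint (D 0) (harmonicPart D Q g u m) = 0 := by
  rw [harmonicPart_eq_harmonicProj hQ hg hD hu hm]
  exact ⟨hg.d_harmonicProj (apply_zero_apply_zero hD) _,
    hg.adjoint_harmonicProj (apply_zero_apply_zero hD) _⟩

lemma harmonicProj_convolve_harmonicPart
    (hQ : IsResolvent (update D 0 0) g Q)
    (hg : IsPartialInverse (D 0) g) (hD : ∀ n, compConv D D n = 0) (hu : IsZigzag D N u)
    {j : ℕ} (hj : j ≤ N) : harmonicProj (D 0) g (convolve Q (harmonicPart D Q g u) j) = 0 := by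
  have h := (hu.normalize (Q := Q) (g := g) hD) j hj
  rw [convolve_eq_add_update_zero, convolve_normalize hQ] at h
  rw [eq_neg_of_add_eq_zero_right h, ← map_neg, hg.harmonicProj_d (apply_zero_apply_zero hD)]

variable {Hgr : ℤ × ℤ → Submodule ℝ H} {p b k : ℤ} {r : ℕ}

lemma IsGradedSeq.gauge (hu : IsGradedSeq Hgr p b u)
    (hQgr : ∀ n : ℕ, MapsGraded Hgr n (1 - n) (Q n)) (hggr : MapsGraded Hgr 0 (-1) g) :
    IsGradedSeq Hgr p (b - 1) (gauge Q g u) := by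
  have hgu := hu.map hggr
  have h := (hu.sub (by simpa using hgu.convolve hQgr)).map hggr
  rwa [← sub_eq_add_neg] at h

lemma IsGradedSeq.normalize (hu : IsGradedSeq Hgr p b u)
    (hDgr : ∀ n : ℕ, MapsGraded Hgr n (1 - n) (D n))
    (hQgr : ∀ n : ℕ, MapsGraded Hgr n (1 - n) (Q n)) (hggr : MapsGraded Hgr 0 (-1) g) :
    IsGradedSeq Hgr p b (normalize D Q g u) :=
  hu.sub (by simpa using (hu.gauge hQgr hggr).convolve hDgr)

lemma IsGradedSeq.harmonicPart (hu : IsGradedSeq Hgr p b u)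
    (hDgr : ∀ n : ℕ, MapsGraded Hgr n (1 - n) (D n))
    (hQgr : ∀ n : ℕ, MapsGraded Hgr n (1 - n) (Q n)) (hggr : MapsGraded Hgr 0 (-1) g) :
    IsGradedSeq Hgr p b (harmonicPart D Q g u) := by
  have hv := hu.normalize hDgr hQgr hggr
  exact hv.add (by simpa using (hv.convolve (update_zero_mapsGraded hDgr)).map hggr)

lemma memB_convolve_sub_harmonicProj
    (hQ : IsResolvent (update D 0 0) g Q)
    (hD : ∀ n, compConv D D n = 0) (hDgr : ∀ n : ℕ, MapsGraded Hgr n (1 - n) (D n))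
    (hggr : MapsGraded Hgr 0 (-1) g) (hr : 1 ≤ r) (hu : IsZigzag D (r - 1) u)
    (hugr : IsGradedSeq Hgr p (k - p) u) :
    MemB Hgr D r (p + r) (k + 1)
      (convolve (update D 0 0) u r -
        harmonicProj (D 0) g (convolve Q (harmonicPart D Q g u) r)) := by
  have hQgr := resolvent_mapsGraded hQ (update_self ..) (update_zero_mapsGraded hDgr) hggr
  set T := convolve (update D 0 0) (normalize D Q g u)
  have hT : D 0 (T r) = 0 := (hu.normalize hD).apply_convolve_update_zero hD (by omega)
  have hsplit : convolve (update D 0 0) u r -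
      harmonicProj (D 0) g (convolve Q (harmonicPart D Q g u) r) =
        D 0 (g (T r) - convolve D (gauge Q g u) r) := by
    rw [← convolve_normalize hQ, harmonicProj_of_d_eq_zero hT, map_sub, ← sub_add,
      convolve_sub_convolve_normalize hD]
    abel
  rw [hsplit]
  refine memB_apply_zero hDgr hr (sub_mem ?_ ?_)
  · have hTgr := (hugr.normalize hDgr hQgr hggr).convolve (update_zero_mapsGraded hDgr) r
    exact mem_grade_of_eq (hggr _ _ _ hTgr) (by ring) (by ring)
  · have hgr := (hugr.gauge hQgr hggr).convolve hDgr r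
    exact mem_grade_of_eq hgr rfl (by ring)

lemma memB_harmonicProj_apply_one (hD : ∀ n, compConv D D n = 0)
    (hDgr : ∀ n : ℕ, MapsGraded Hgr n (1 - n) (D n)) (hggr : MapsGraded Hgr 0 (-1) g)
    (hr : 2 ≤ r) {c : H} (hc : c ∈ Hgr (p - 1, k - p)) (hc0 : D 0 c = 0) :
    MemB Hgr D r p k (harmonicProj (D 0) g (D 1 c)) := by
  have hD1c : D 1 c ∈ Hgr (p, k - p) :=
    mem_grade_of_eq (hDgr 1 _ _ _ hc) (by push_cast; ring) (by push_cast; ring)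
  rw [harmonicProj_of_d_eq_zero (by rw [apply_zero_apply_one hD, hc0, map_zero, neg_zero]),
    sub_eq_add_neg, ← map_neg, add_comm]
  exact MemB.add (memB_apply_zero hDgr (by omega)
    (neg_mem (mem_grade_of_eq (hggr _ _ _ hD1c) (by ring) (by ring))))
    (memB_apply_one hDgr hr hc hc0)

end NormalForm

section Witnesses

variable {R E : Type*} [Ring R] [AddCommGroup E] [Module R E] {α : E} {z : ℕ → E} {r : ℕ}

def witnessZigzag (α : E) (z : ℕ → E) (r : ℕ) (m : ℕ) : E :=
  if m = 0 then α else if m < r then -z m else 0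

@[simp]
lemma witnessZigzag_zero : witnessZigzag α z r 0 = α := rfl

lemma isGradedSeq_witnessZigzag {Hgr : ℤ × ℤ → Submodule R E} {p k : ℤ}
    (hα : α ∈ Hgr (p, k - p))
    (hz : ∀ j : ℕ, 1 ≤ j → j ≤ r - 1 → z j ∈ Hgr (p + j, k - p - j)) :
    IsGradedSeq Hgr p (k - p) (witnessZigzag α z r) := by
  intro m
  unfold witnessZigzag
  split_ifs with h0 hr
  · subst h0; simpa using hα
  · exact neg_mem (hz m (by omega) (by omega))
  · exact zero_mem _

variable [TopologicalSpace E] {D : ℕ → E →L[R] E}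

lemma isZigzag_witnessZigzag (hα : D 0 α = 0)
    (hz : ∀ n : ℕ, 1 ≤ n → n ≤ r - 1 → D n α = ∑ i ∈ range n, D i (z (n - i))) :
    IsZigzag D (r - 1) (witnessZigzag α z r) := by
  intro n hn
  rcases Nat.eq_zero_or_pos n with rfl | hn0
  · simpa [convolve, witnessZigzag] using hα
  have hterm : ∀ i ∈ range n, D i (witnessZigzag α z r (n - i)) = -D i (z (n - i)) := by
    intro i hi
    simp only [mem_range] at hi
    simp [witnessZigzag, show n - i ≠ 0 by omega, show n - i < r by omega]
  rw [convolve, sum_range_succ, sum_congr rfl hterm, sum_neg_distrib, ← hz n hn0 hn]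
  simp [witnessZigzag]

lemma convolve_update_witnessZigzag (hr : 1 ≤ r) :
    convolve (update D 0 0) (witnessZigzag α z r) r =
      D r α - ∑ i ∈ Ico 1 r, D (r - i) (z i) := by
  have hterm : ∀ i ∈ Ico 1 r,
      D i (witnessZigzag α z r (r - i)) = -D (r - (r - i)) (z (r - i)) := by
    intro i hi
    simp only [mem_Ico] at hi
    simp [witnessZigzag, show r - i ≠ 0 by omega, show r - i < r by omega,
      Nat.sub_sub_self hi.2.le]
  rw [convolve_update_zero_of_pos _ _ hr, sum_congr rfl hterm, sum_neg_distrib,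
    sum_Ico_one_sub fun i => D (r - i) (z i), sub_eq_add_neg]
  simp [witnessZigzag]

end Witnesses

section RuminDifferentials

variable {H : Type*} [NormedAddCommGroup H] [InnerProductSpace ℝ H]
  {Hgr : ℤ × ℤ → Submodule ℝ H} {D P dc : ℕ → H →L[ℝ] H} {g : H →L[ℝ] H}
  {u : ℕ → H} {N r : ℕ} {p k : ℤ}

lemma harmonicProj_convolve_update (hdc : ∀ j x, dc j x = harmonicProj (D 0) g (P j x))
    (W : ℕ → H) {j : ℕ} (hj : 1 ≤ j) :
    harmonicProj (D 0) g (convolve (update P 0 0) W j) =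
      dc j (W 0) + ∑ i ∈ Ico 1 j, dc i (W (j - i)) := by
  simp [convolve_update_zero_of_pos _ _ hj, hdc]

lemma dc_harmonicPart_zero (hdc : ∀ j x, dc j x = harmonicProj (D 0) g (P j x))
    (hQ : IsResolvent (update D 0 0) g (update P 0 0)) (hg : IsPartialInverse (D 0) g)
    (hD : ∀ n, compConv D D n = 0) (hu : IsZigzag D N u) {j : ℕ} (hj1 : 1 ≤ j)
    (hj : j ≤ N) : dc j (harmonicPart D (update P 0 0) g u 0) =
      ∑ i ∈ Ico 1 j, dc i ((-harmonicPart D (update P 0 0) g u) (j - i)) := by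
  have h := harmonicProj_convolve_harmonicPart hQ hg hD hu hj
  rw [harmonicProj_convolve_update hdc _ hj1] at h
  simpa [eq_neg_iff_add_eq_zero] using h

lemma memB_convolve_sub_dc [CompleteSpace H] (hdc : ∀ j x, dc j x = harmonicProj (D 0) g (P j x))
    (hP1 : P 1 = D 1) (hQ : IsResolvent (update D 0 0) g (update P 0 0))
    (hg : IsPartialInverse (D 0) g) (hD : ∀ n, compConv D D n = 0)
    (hDgr : ∀ n : ℕ, MapsGraded Hgr n (1 - n) (D n)) (hggr : MapsGraded Hgr 0 (-1) g)
    (hr : 1 ≤ r) (hu : IsZigzag D (r - 1) u) (hugr : IsGradedSeq Hgr p (k - p) u) :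
    MemB Hgr D r (p + r) (k + 1) (convolve (update D 0 0) u r -
      (dc r (harmonicPart D (update P 0 0) g u 0) -
        ∑ i ∈ Ico 2 r, dc i ((-harmonicPart D (update P 0 0) g u) (r - i)))) := by
  set W := harmonicPart D (update P 0 0) g u
  have hB := memB_convolve_sub_harmonicProj hQ hD hDgr hggr hr hu hugr
  rw [harmonicProj_convolve_update hdc W hr] at hB
  rcases hr.eq_or_lt with rfl | hr2
  · simpa using hB
  have hWgr := hugr.harmonicPart hDgr (resolvent_mapsGraded hQ (update_self ..)
    (update_zero_mapsGraded hDgr) hggr) hggr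
  have hc : W (r - 1) ∈ Hgr (p + r - 1, k + 1 - (p + r)) :=
    mem_grade_of_eq (hWgr (r - 1)) (by omega) (by omega)
  have h1 := memB_harmonicProj_apply_one hD hDgr hggr hr2 hc
    (harmonicPart_isHarmonic hQ hg hD hu le_rfl).1
  rw [sum_eq_sum_Ico_succ_bot hr2 fun i => dc i (W (r - i)), hdc 1, hP1] at hB
  convert MemB.add hB h1 using 1
  simp only [Pi.neg_apply, map_neg, sum_neg_distrib, Nat.reduceAdd]
  abel

end RuminDifferentials

end Multicomplex

open Multicomplex

theorem spectral_differential_rumin_representative_general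
    {H : Type*} [NormedAddCommGroup H] [InnerProductSpace ℝ H] [CompleteSpace H]
    (Hgr : ℤ × ℤ → Submodule ℝ H)
    (D : ℕ → H →L[ℝ] H)
    (hDdeg : ∀ (i : ℕ) (a b : ℤ), ∀ x ∈ Hgr (a, b), D i x ∈ Hgr (a + (i : ℤ), b + 1 - (i : ℤ)))
    (hDD : ∀ n : ℕ, ∑ i ∈ Finset.range (n + 1), (D i).comp (D (n - i)) = 0)
    (g : H →L[ℝ] H)
    (hdg_perp : ∀ x : H, x - D 0 (g x) ∈ (LinearMap.range (D 0 : H →ₗ[ℝ] H))ᗮ)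
    (hgd_mem : ∀ x : H, g (D 0 x) ∈ (LinearMap.ker (D 0 : H →ₗ[ℝ] H))ᗮ)
    (hgvan : ∀ x ∈ (LinearMap.range (D 0 : H →ₗ[ℝ] H))ᗮ, g x = 0)
    (hgdeg : ∀ (a b : ℤ), ∀ x ∈ Hgr (a, b), g x ∈ Hgr (a, b - 1))
    (P : ℕ → H →L[ℝ] H) (hP1 : P 1 = D 1)
    (hPrec : ∀ r : ℕ, 2 ≤ r →
      P r = D r - ∑ j ∈ Finset.Ico 1 r, (D (r - j)).comp (g.comp (P j)))
    (dc : ℕ → H →L[ℝ] H)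
    (hdc : ∀ r : ℕ, dc r = P r - g.comp ((D 0).comp (P r)) - (D 0).comp (g.comp (P r)))
    (Pi0 : H →L[ℝ] H)
    (hPi0 : ∀ x : H, Pi0 x = x - g (D 0 x) - D 0 (g x))
    (r : ℕ) (hr : 1 ≤ r) (p k : ℤ) (α : H) (z : ℕ → H)
    (hα : α ∈ Hgr (p, k - p)) (hd0α : D 0 α = 0)
    (hz : ∀ j : ℕ, 1 ≤ j → j ≤ r - 1 → z j ∈ Hgr (p + (j : ℤ), k - p - (j : ℤ)))
    (hzrel : ∀ n : ℕ, 1 ≤ n → n ≤ r - 1 →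
      D n α = ∑ i ∈ Finset.range n, D i (z (n - i))) :
    ∃ ω : ℕ → H,
      (∀ i : ℕ, 1 ≤ i → i ≤ r - 1 →
        D 0 (ω i) = 0 ∧ ContinuousLinearMap.adjoint (D 0) (ω i) = 0 ∧
          ω i ∈ Hgr (p + (i : ℤ), k - p - (i : ℤ))) ∧
      (∀ j : ℕ, 1 ≤ j → j ≤ r - 1 →
        dc j (Pi0 α) = ∑ i ∈ Finset.Ico 1 j, dc i (ω (j - i))) ∧
      MemB Hgr D r (p + (r : ℤ)) (k + 1)
        ((D r α - ∑ i ∈ Finset.Ico 1 r, D (r - i) (z i))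
          - (dc r (Pi0 α) - ∑ i ∈ Finset.Ico 2 r, dc i (ω (r - i)))) := by
  have hDgr : ∀ n : ℕ, MapsGraded Hgr n (1 - n) (D n) := fun n a b x hx =>
    mem_grade_of_eq (hDdeg n a b x hx) rfl (by ring)
  have hggr : MapsGraded Hgr 0 (-1) g := fun a b x hx =>
    mem_grade_of_eq (hgdeg a b x hx) (by ring) (by ring)
  have hg : IsPartialInverse (D 0) g := ⟨hdg_perp, hgd_mem, hgvan⟩
  have hQ := isResolvent_update hP1 hPrec
  have hdc' : ∀ j x, dc j x = harmonicProj (D 0) g (P j x) := fun j x => by rw [hdc]; rfl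
  have hu := isZigzag_witnessZigzag (z := z) (r := r) hd0α hzrel
  have hugr := isGradedSeq_witnessZigzag (Hgr := Hgr) hα hz
  have hW0 : harmonicPart D (update P 0 0) g (witnessZigzag α z r) 0 = Pi0 α := by
    rw [harmonicPart_zero hQ (by rwa [witnessZigzag_zero]), witnessZigzag_zero,
      harmonicProj_apply, hPi0]
  have hWgr := hugr.harmonicPart hDgr
    (resolvent_mapsGraded hQ (update_self ..) (update_zero_mapsGraded hDgr) hggr) hggr
  refine ⟨-harmonicPart D (update P 0 0) g (witnessZigzag α z r), fun i _ hi => ?_,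
    fun j hj1 hj2 => ?_, ?_⟩
  · obtain ⟨h0, hadj⟩ := harmonicPart_isHarmonic hQ hg hDD hu hi
    exact ⟨by rw [Pi.neg_apply, map_neg, h0, neg_zero],
      by rw [Pi.neg_apply, map_neg, hadj, neg_zero], neg_mem (hWgr i)⟩
  · rw [← hW0]
    exact dc_harmonicPart_zero hdc' hQ hg hDD hu hj1 hj2
  · rw [← hW0, ← convolve_update_witnessZigzag hr]
    exact memB_convolve_sub_dc hdc' hP1 hQ hg hDD hDgr hggr hr hu hugr

/-- **The spectral sequence differentials in terms of Rumin forms and Rumin differentials**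
(Proposition 3.13 of the paper).  For `r ≥ 1`, `α ∈ Z_r^{p,k}` with witnesses
`z_{p+1}, …, z_{p+r−1}`, there exist harmonic `ω̄_{p+i} ∈ ker d₀ ∩ ker d₀* ∩ H_{p+i,k−p−i}`
for `i = 1, …, r−1`, satisfying `d_c^j(Π₀α) = ∑_{i=1}^{j−1} d_c^i(ω̄_{p+j−i})` for all
`j = 1, …, r−1`, such that
`(d_r α − ∑_{i=1}^{r−1} d_{r−i} z_{p+i}) − (d_c^r(Π₀α) − ∑_{i=2}^{r−1} d_c^i(ω̄_{p+r−i}))`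
belongs to `B_r^{p+r,k+1}`; i.e. the `r`-th spectral sequence differential applied to the
class of `α` is represented by `d_c^r(Π₀α) − ∑_{i=2}^{r−1} d_c^i(ω̄_{p+r−i})`. -/
theorem spectral_differential_rumin_representative
    {H : Type*} [NormedAddCommGroup H] [InnerProductSpace ℝ H] [CompleteSpace H]
    (Hgr : ℤ × ℤ → Submodule ℝ H)
    (hinternal : DirectSum.IsInternal Hgr)
    (hclosed : ∀ ab : ℤ × ℤ, IsClosed (Hgr ab : Set H))
    (horth : ∀ ab cd : ℤ × ℤ, ab ≠ cd → ∀ x ∈ Hgr ab, ∀ y ∈ Hgr cd, ⟪x, y⟫_ℝ = 0)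
    (hfin : {ab : ℤ × ℤ | Hgr ab ≠ ⊥}.Finite)
    (s : ℕ) (D : ℕ → H →L[ℝ] H)
    (hDvan : ∀ i : ℕ, s ≤ i → D i = 0)
    (hDdeg : ∀ (i : ℕ) (a b : ℤ), ∀ x ∈ Hgr (a, b), D i x ∈ Hgr (a + (i : ℤ), b + 1 - (i : ℤ)))
    (hDD : ∀ n : ℕ, ∑ i ∈ Finset.range (n + 1), (D i).comp (D (n - i)) = 0)
    (hd0closed : IsClosed (LinearMap.range (D 0 : H →ₗ[ℝ] H) : Set H))
    (g : H →L[ℝ] H)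
    (hdg_perp : ∀ x : H, x - D 0 (g x) ∈ (LinearMap.range (D 0 : H →ₗ[ℝ] H))ᗮ)
    (hgd_mem : ∀ x : H, g (D 0 x) ∈ (LinearMap.ker (D 0 : H →ₗ[ℝ] H))ᗮ)
    (hgd_perp : ∀ x : H, x - g (D 0 x) ∈ ((LinearMap.ker (D 0 : H →ₗ[ℝ] H))ᗮ)ᗮ)
    (hgvan : ∀ x ∈ (LinearMap.range (D 0 : H →ₗ[ℝ] H))ᗮ, g x = 0)
    (hgdeg : ∀ (a b : ℤ), ∀ x ∈ Hgr (a, b), g x ∈ Hgr (a, b - 1))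
    (P : ℕ → H →L[ℝ] H) (hP1 : P 1 = D 1)
    (hPrec : ∀ r : ℕ, 2 ≤ r →
      P r = D r - ∑ j ∈ Finset.Ico 1 r, (D (r - j)).comp (g.comp (P j)))
    (dc : ℕ → H →L[ℝ] H)
    (hdc : ∀ r : ℕ, dc r = P r - g.comp ((D 0).comp (P r)) - (D 0).comp (g.comp (P r)))
    (Pi0 : H →L[ℝ] H)
    (hPi0 : ∀ x : H, Pi0 x = x - g (D 0 x) - D 0 (g x))
    (r : ℕ) (hr : 1 ≤ r) (p k : ℤ) (α : H) (z : ℕ → H)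
    (hα : α ∈ Hgr (p, k - p)) (hd0α : D 0 α = 0)
    (hz : ∀ j : ℕ, 1 ≤ j → j ≤ r - 1 → z j ∈ Hgr (p + (j : ℤ), k - p - (j : ℤ)))
    (hzrel : ∀ n : ℕ, 1 ≤ n → n ≤ r - 1 →
      D n α = ∑ i ∈ Finset.range n, D i (z (n - i))) :
    ∃ ω : ℕ → H,
      (∀ i : ℕ, 1 ≤ i → i ≤ r - 1 →
        D 0 (ω i) = 0 ∧ ContinuousLinearMap.adjoint (D 0) (ω i) = 0 ∧
          ω i ∈ Hgr (p + (i : ℤ), k - p - (i : ℤ))) ∧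
      (∀ j : ℕ, 1 ≤ j → j ≤ r - 1 →
        dc j (Pi0 α) = ∑ i ∈ Finset.Ico 1 j, dc i (ω (j - i))) ∧
      MemB Hgr D r (p + (r : ℤ)) (k + 1)
        ((D r α - ∑ i ∈ Finset.Ico 1 r, D (r - i) (z i))
          - (dc r (Pi0 α) - ∑ i ∈ Finset.Ico 2 r, dc i (ω (r - i)))) :=
  spectral_differential_rumin_representative_general Hgr D hDdeg hDD g hdg_perp hgd_mem hgvan hgdeg
    P hP1 hPrec dc hdc Pi0 hPi0 r hr p k α z hα hd0α hz hzrel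
end

section
/- For every x ∈ M with d_0 x = 0 and g x = 0, one has Π x = ∑_{r=1}^{Q} g(∂_r x), and consequently Π_0(d(Π_E x)) = ∑_{r=1}^{Q} ∂_r x − g(d_0(∑_{r=1}^{Q} ∂_r x)) − d_0(g(∑_{r=1}^{Q} ∂_r x)). (Here ∂_r x = 0 for r > Q, since ∂_r raises the weight by r.) -/
/-!
Filter `M` by the first weight, `F c := ⨆_{a ≥ c} M_{a,b}`, so that `F 0 = M` and `F (Q + 1) = 0`.
Every `d_i` and, by induction on the recursion, every `∂_r` raises this filtration by its index,
while `g` preserves it; hence `∂_r = 0` for `r > Q` and `b = -g ∘ (d - d₀)` satisfies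
`b ^ (Q + 1) = 0`. Summing the recursion for `∂_r x` over `r` and exchanging the double sum gives
`S = d x - (d - d₀)(g S)` for `S := ∑_{r=1}^{Q} ∂_r x`, i.e. `u := g S` solves `u = g (d x) + b u`.
Inverting `1 - b` by its geometric series gives `Π x = u`, so `d (Π_E x) = S - d₀ u`, and `Π₀`
kills the image of `d₀`.
-/

open Finset

theorem sum_Icc_sum_Ico_sub_eq {A : Type*} [AddCommMonoid A] (f : ℕ → ℕ → A) (N : ℕ) :
    ∑ r ∈ Icc 1 N, ∑ j ∈ Ico 1 r, f (r - j) j = ∑ j ∈ Icc 1 N, ∑ k ∈ Icc 1 (N - j), f k j := by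
  rw [sum_comm' (t' := Icc 1 N) (s' := fun j => Ioc j N)
    (by intro r j; simp only [mem_Icc, mem_Ico, mem_Ioc]; omega)]
  refine sum_congr rfl fun j _ => sum_nbij' (· - j) (· + j) ?_ ?_ ?_ ?_ fun _ _ => rfl <;>
    intro k hk <;> simp only [mem_Ioc, mem_Icc] at hk ⊢ <;> omega

theorem sum_Icc_one_eq_sum_range_sub {A : Type*} [AddCommGroup A] {f : ℕ → A} {s n : ℕ}
    (hf : ∀ i, s ≤ i → f i = 0) (hn : s ≤ n + 1) :
    ∑ i ∈ Icc 1 n, f i = ∑ i ∈ range (s + 1), f i - f 0 := by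
  have h : ∀ m, s ≤ m → ∑ i ∈ range m, f i = ∑ i ∈ range s, f i := fun m hm =>
    (sum_subset (range_subset_range.2 hm) fun i _ hi => hf i (by simpa using hi)).symm
  rw [h _ (by omega), ← h (n + 1) hn, sum_range_succ', add_sub_cancel_right,
    ← Ico_add_one_right_eq_Icc, sum_Ico_eq_sum_range, Nat.add_sub_cancel]
  simp only [add_comm 1]

theorem geom_sum_apply_eq_sub {R M : Type*} [Semiring R] [AddCommGroup M] [Module R M]
    {b : Module.End R M} {u v : M} (h : u = v + b u) (n : ℕ) :
    (∑ j ∈ range n, b ^ j) v = u - (b ^ n) u := by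
  have hv : v = (1 - b) u := by
    rw [LinearMap.sub_apply, Module.End.one_apply, eq_sub_iff_add_eq, ← h]
  rw [hv, ← Module.End.mul_apply, geom_sum_mul_neg, LinearMap.sub_apply, Module.End.one_apply]

section WeightFiltration

variable {R M : Type*} [Semiring R] [AddCommMonoid M] [Module R M]

variable (Mgr : ℤ × ℤ → Submodule R M) in
def weightFiltration (c : ℤ) : Submodule R M :=
  ⨆ (p : ℤ × ℤ) (_ : c ≤ p.1), Mgr p

variable {Mgr : ℤ × ℤ → Submodule R M}

theorem weightFiltration_antitone : Antitone (weightFiltration Mgr) := fun _ _ h =>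
  iSup₂_le fun p hp => le_iSup₂_of_le p (h.trans hp) le_rfl

theorem le_weightFiltration {c : ℤ} {p : ℤ × ℤ} (hp : c ≤ p.1) :
    Mgr p ≤ weightFiltration Mgr c :=
  le_iSup₂_of_le p hp le_rfl

theorem weightFiltration_zero_eq_top (htop : ⨆ p, Mgr p = ⊤)
    (hneg : ∀ a b, a < 0 → Mgr (a, b) = ⊥) : weightFiltration Mgr 0 = ⊤ := by
  refine eq_top_iff.2 (htop ▸ iSup_le fun p => ?_)
  by_cases hp : 0 ≤ p.1
  · exact le_weightFiltration hp
  · rw [hneg p.1 p.2 (by omega)]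
    exact bot_le

theorem weightFiltration_eq_bot {Q c : ℤ} (hQ : ∀ a b, Q < a → Mgr (a, b) = ⊥) (hc : Q < c) :
    weightFiltration Mgr c = ⊥ :=
  eq_bot_iff.2 (iSup₂_le fun p hp => (hQ p.1 p.2 (hc.trans_le hp)).le)

end WeightFiltration

section WeightRaising

variable {R M : Type*} [Ring R] [AddCommGroup M] [Module R M] {Mgr : ℤ × ℤ → Submodule R M}

variable (Mgr) in
def weightRaising (k : ℤ) : AddSubgroup (M →ₗ[R] M) where
  carrier := {f | ∀ c, weightFiltration Mgr c ≤ (weightFiltration Mgr (c + k)).comap f}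
  add_mem' hf hg c _ hx := Submodule.mem_comap.2 (add_mem (hf c hx) (hg c hx))
  zero_mem' _ _ _ := (Submodule.mem_comap.2 (zero_mem _))
  neg_mem' hf c _ hx := Submodule.mem_comap.2 (neg_mem (hf c hx))

theorem mem_weightRaising_of_mapsTo {k : ℤ} {f : M →ₗ[R] M} (e : ℤ → ℤ)
    (h : ∀ a b, ∀ x ∈ Mgr (a, b), f x ∈ Mgr (a + k, e b)) : f ∈ weightRaising Mgr k :=
  fun _ => iSup₂_le fun p hp x hx => weightFiltration_antitone (by omega)
    (le_weightFiltration (p := (p.1 + k, e p.2)) le_rfl (h p.1 p.2 x hx))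

theorem weightRaising_antitone : Antitone (weightRaising Mgr) :=
  fun _ _ hkl _ hf c _ hx => weightFiltration_antitone (by omega) (hf c hx)

theorem comp_mem_weightRaising {k l : ℤ} {f g : M →ₗ[R] M} (hf : f ∈ weightRaising Mgr k)
    (hg : g ∈ weightRaising Mgr l) : f ∘ₗ g ∈ weightRaising Mgr (k + l) := fun c _ hx => by
  have := hf (c + l) (hg c hx)
  rwa [add_assoc, add_comm l] at this

theorem pow_mem_weightRaising {k : ℤ} {f : Module.End R M} (hf : f ∈ weightRaising Mgr k) :
    ∀ n : ℕ, f ^ n ∈ weightRaising Mgr (n * k)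
  | 0 => fun c _ hx => by simpa using hx
  | n + 1 => by
    rw [pow_succ, Module.End.mul_eq_comp, Nat.cast_succ, add_one_mul]
    exact comp_mem_weightRaising (pow_mem_weightRaising hf n) hf

theorem eq_zero_of_mem_weightRaising {Q : ℕ} (htop : ⨆ p, Mgr p = ⊤)
    (hneg : ∀ a b, a < 0 → Mgr (a, b) = ⊥) (hQ : ∀ a b, (Q : ℤ) < a → Mgr (a, b) = ⊥)
    {k : ℤ} {f : M →ₗ[R] M} (hf : f ∈ weightRaising Mgr k) (hk : Q < k) : f = 0 :=
  LinearMap.ext fun x => by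
    have := hf 0 ((weightFiltration_zero_eq_top htop hneg).symm ▸ Submodule.mem_top (x := x))
    rwa [zero_add, weightFiltration_eq_bot hQ hk, Submodule.mem_comap, Submodule.mem_bot] at this

theorem pow_eq_zero_of_mem_weightRaising_one {Q : ℕ} (htop : ⨆ p, Mgr p = ⊤)
    (hneg : ∀ a b, a < 0 → Mgr (a, b) = ⊥) (hQ : ∀ a b, (Q : ℤ) < a → Mgr (a, b) = ⊥)
    {f : Module.End R M} (hf : f ∈ weightRaising Mgr 1) : f ^ (Q + 1) = 0 :=
  eq_zero_of_mem_weightRaising htop hneg hQ (pow_mem_weightRaising hf (Q + 1)) (by simp)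

end WeightRaising

section Multicomplex

variable {R M : Type*} [Ring R] [AddCommGroup M] [Module R M] {D P : ℕ → M →ₗ[R] M}
  {g : M →ₗ[R] M}

theorem partial_eq_of_one_le (hP1 : P 1 = D 1)
    (hPrec : ∀ r : ℕ, 2 ≤ r → P r = D r - ∑ j ∈ Ico 1 r, D (r - j) ∘ₗ (g ∘ₗ P j))
    (r : ℕ) (hr : 1 ≤ r) : P r = D r - ∑ j ∈ Ico 1 r, D (r - j) ∘ₗ (g ∘ₗ P j) := by
  obtain rfl | hr := hr.eq_or_lt
  · simp [hP1]
  · exact hPrec r hr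

theorem partial_mem_weightRaising {Mgr : ℤ × ℤ → Submodule R M}
    (hD : ∀ i : ℕ, D i ∈ weightRaising Mgr i) (hg : g ∈ weightRaising Mgr 0)
    (hP : ∀ r : ℕ, 1 ≤ r → P r = D r - ∑ j ∈ Ico 1 r, D (r - j) ∘ₗ (g ∘ₗ P j)) :
    ∀ r : ℕ, 1 ≤ r → P r ∈ weightRaising Mgr r := by
  intro r
  induction r using Nat.strong_induction_on with
  | _ r ih =>
    intro hr
    rw [hP r hr]
    refine sub_mem (hD r) (sum_mem fun j hj => ?_)
    obtain ⟨hj1, hjr⟩ := mem_Ico.1 hj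
    exact weightRaising_antitone (by omega)
      (comp_mem_weightRaising (hD (r - j)) (comp_mem_weightRaising hg (ih j hjr hj1)))

theorem comp_sub_comp_sum_mem_weightRaising {Mgr : ℤ × ℤ → Submodule R M} {s : ℕ}
    (hD : ∀ i : ℕ, D i ∈ weightRaising Mgr i) (hg : g ∈ weightRaising Mgr 0) :
    g ∘ₗ D 0 - g ∘ₗ ∑ i ∈ range (s + 1), D i ∈ weightRaising Mgr 1 := by
  have hdD : ∑ i ∈ range (s + 1), D i - D 0 ∈ weightRaising Mgr 1 := by
    rw [sum_range_succ', add_sub_cancel_right]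
    exact sum_mem fun i _ => weightRaising_antitone (by omega) (hD (i + 1))
  simpa [LinearMap.comp_sub] using neg_mem (comp_mem_weightRaising hg hdD)

theorem sum_partial_apply_eq {s Q : ℕ} {d : M →ₗ[R] M} (hDvan : ∀ i, s ≤ i → D i = 0)
    (hd : d = ∑ i ∈ range (s + 1), D i)
    (hP : ∀ r : ℕ, 1 ≤ r → P r = D r - ∑ j ∈ Ico 1 r, D (r - j) ∘ₗ (g ∘ₗ P j))
    {x : M} (hx0 : D 0 x = 0) (hPx : ∀ r, Q < r → P r x = 0) :
    ∑ r ∈ Icc 1 Q, P r x = d x - (d - D 0) (g (∑ r ∈ Icc 1 Q, P r x)) := by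
  have htrunc (y : M) (n : ℕ) (hn : s ≤ n + 1) : ∑ k ∈ Icc 1 n, D k y = (d - D 0) y := by
    rw [hd, LinearMap.sub_apply, LinearMap.sum_apply]
    exact sum_Icc_one_eq_sum_range_sub (fun i hi => by rw [hDvan i hi, LinearMap.zero_apply]) hn
  -- Past `Q + s`, each inner sum `∑_{k ≤ Q + s - j} D k` with `j ≤ Q` is all of `d - D 0`.
  have hextend (y : ℕ → M) (hy : ∀ r, Q < r → y r = 0) :
      ∑ r ∈ Icc 1 Q, y r = ∑ r ∈ Icc 1 (Q + s), y r :=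
    sum_subset (Icc_subset_Icc_right (by omega)) fun r hr hrQ => hy r (by
      simp only [mem_Icc] at hr hrQ; omega)
  calc ∑ r ∈ Icc 1 Q, P r x
      = ∑ r ∈ Icc 1 (Q + s), P r x := hextend _ hPx
    _ = ∑ r ∈ Icc 1 (Q + s), D r x
          - ∑ r ∈ Icc 1 (Q + s), ∑ j ∈ Ico 1 r, D (r - j) (g (P j x)) := by
      rw [← sum_sub_distrib]
      refine sum_congr rfl fun r hr => ?_
      rw [hP r (mem_Icc.1 hr).1]
      simp only [LinearMap.sub_apply, LinearMap.sum_apply, LinearMap.comp_apply]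
    _ = d x - ∑ j ∈ Icc 1 (Q + s), (d - D 0) (g (P j x)) := by
      rw [htrunc x _ (by omega), LinearMap.sub_apply, hx0, sub_zero,
        sum_Icc_sum_Ico_sub_eq (fun k j => D k (g (P j x)))]
      refine congrArg (d x - ·) (sum_congr rfl fun j hj => ?_)
      by_cases hjQ : j ≤ Q
      · exact htrunc _ _ (by omega)
      · simp [hPx j (by omega)]
    _ = d x - (d - D 0) (g (∑ r ∈ Icc 1 Q, P r x)) := by
      rw [hextend _ hPx, map_sum, map_sum]

theorem geom_sum_apply_eq_of_eq_sub {d D₀ b : Module.End R M} {n : ℕ}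
    (hb : b = g ∘ₗ D₀ - g ∘ₗ d) (hbn : b ^ n = 0) {x S : M} (hS : S = d x - (d - D₀) (g S)) :
    (∑ j ∈ range n, b ^ j) (g (d x)) = g S := by
  have hfix : g S = g (d x) + b (g S) := by
    conv_lhs => rw [hS]
    simp only [hb, map_sub, LinearMap.sub_apply, LinearMap.comp_apply]
    abel
  rw [geom_sum_apply_eq_sub hfix, hbn, LinearMap.zero_apply, sub_zero]

theorem id_sub_comp_sub_comp_comp_eq_zero {f g : M →ₗ[R] M} (hff : f ∘ₗ f = 0)
    (hfgf : f ∘ₗ g ∘ₗ f = f) :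
    (LinearMap.id - g ∘ₗ f - f ∘ₗ g) ∘ₗ f = 0 := by
  rw [LinearMap.sub_comp, LinearMap.sub_comp, LinearMap.comp_assoc, hff, LinearMap.comp_assoc, hfgf,
    LinearMap.comp_zero, LinearMap.id_comp, sub_zero, sub_self]

end Multicomplex

theorem pi_and_rumin_differential_on_harmonic_general
    {R M : Type*} [CommRing R] [AddCommGroup M] [Module R M]
    (Mgr : ℤ × ℤ → Submodule R M)
    (hinternal : DirectSum.IsInternal Mgr)
    (s : ℕ) (D : ℕ → M →ₗ[R] M)
    (hDvan : ∀ i : ℕ, s ≤ i → D i = 0)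
    (hDdeg : ∀ (i : ℕ) (a b : ℤ), ∀ x ∈ Mgr (a, b), D i x ∈ Mgr (a + (i : ℤ), b + 1 - (i : ℤ)))
    (hDD : ∀ n : ℕ, ∑ i ∈ Finset.range (n + 1), D i ∘ₗ D (n - i) = 0)
    (Q : ℕ) (hQ : ∀ a b : ℤ, a < 0 ∨ (Q : ℤ) < a → Mgr (a, b) = ⊥)
    (d : M →ₗ[R] M) (hd : d = ∑ i ∈ Finset.range (s + 1), D i)
    (g : M →ₗ[R] M)
    (hgdeg : ∀ (a b : ℤ), ∀ x ∈ Mgr (a, b), g x ∈ Mgr (a, b - 1))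
    (hdgd : D 0 ∘ₗ g ∘ₗ D 0 = D 0)
    (b : M →ₗ[R] M) (hb : b = g ∘ₗ D 0 - g ∘ₗ d)
    (Pi : M →ₗ[R] M)
    (hPi : Pi = ((∑ j ∈ Finset.range (Q + 1), b ^ j) ∘ₗ g) ∘ₗ d
        + (d ∘ₗ (∑ j ∈ Finset.range (Q + 1), b ^ j)) ∘ₗ g)
    (PiE : M →ₗ[R] M) (hPiE : PiE = LinearMap.id - Pi)
    (Pi0 : M →ₗ[R] M) (hPi0 : Pi0 = LinearMap.id - g ∘ₗ D 0 - D 0 ∘ₗ g)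
    (P : ℕ → M →ₗ[R] M) (hP1 : P 1 = D 1)
    (hPrec : ∀ r : ℕ, 2 ≤ r → P r = D r - ∑ j ∈ Finset.Ico 1 r, D (r - j) ∘ₗ (g ∘ₗ P j))
    (x : M) (hx0 : D 0 x = 0) (hxg : g x = 0) :
    (∀ r : ℕ, Q < r → P r x = 0) ∧
    Pi x = ∑ r ∈ Finset.Icc 1 Q, g (P r x) ∧
    Pi0 (d (PiE x)) = (∑ r ∈ Finset.Icc 1 Q, P r x)
        - g (D 0 (∑ r ∈ Finset.Icc 1 Q, P r x))
        - D 0 (g (∑ r ∈ Finset.Icc 1 Q, P r x)) := by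
  have htop := hinternal.submodule_iSup_eq_top
  have hneg (a b : ℤ) (ha : a < 0) : Mgr (a, b) = ⊥ := hQ a b (Or.inl ha)
  have hbig (a b : ℤ) (ha : (Q : ℤ) < a) : Mgr (a, b) = ⊥ := hQ a b (Or.inr ha)
  have hDw (i : ℕ) : D i ∈ weightRaising Mgr i :=
    mem_weightRaising_of_mapsTo (· + 1 - i) (hDdeg i)
  have hgw : g ∈ weightRaising Mgr 0 :=
    mem_weightRaising_of_mapsTo (· - 1) (by simpa using hgdeg)
  have hP := partial_eq_of_one_le hP1 hPrec
  have hPvan (r : ℕ) (hr : Q < r) : P r = 0 := eq_zero_of_mem_weightRaising htop hneg hbig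
    (partial_mem_weightRaising hDw hgw hP r (by omega)) (by omega)
  have hbnil : b ^ (Q + 1) = 0 := pow_eq_zero_of_mem_weightRaising_one htop hneg hbig
    (hb ▸ hd ▸ comp_sub_comp_sum_mem_weightRaising hDw hgw)
  set S := ∑ r ∈ Icc 1 Q, P r x
  have hS : S = d x - (d - D 0) (g S) :=
    sum_partial_apply_eq hDvan hd hP hx0 fun r hr => by rw [hPvan r hr, LinearMap.zero_apply]
  have hPix : Pi x = g S := by
    simp only [hPi, LinearMap.add_apply, LinearMap.comp_apply, hxg, map_zero, add_zero]
    exact geom_sum_apply_eq_of_eq_sub hb hbnil hS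
  refine ⟨fun r hr => by rw [hPvan r hr, LinearMap.zero_apply], by rw [hPix, map_sum], ?_⟩
  have hdPiE : d (PiE x) = S - D 0 (g S) := by
    rw [hPiE, LinearMap.sub_apply, LinearMap.id_apply, map_sub, hPix]
    conv_rhs => arg 1; rw [hS]
    rw [LinearMap.sub_apply]
    abel
  have hD0D0 : D 0 ∘ₗ D 0 = 0 := by simpa using hDD 0
  rw [hdPiE, map_sub, ← LinearMap.comp_apply Pi0, hPi0,
    id_sub_comp_sub_comp_comp_eq_zero hD0D0 hdgd]
  simp only [LinearMap.zero_apply, sub_zero, LinearMap.sub_apply, LinearMap.id_apply,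
    LinearMap.comp_apply]

/-- For an `s`-multicomplex with weights between `0` and `Q`, total differential `d`,
partial inverse `g` of `d₀`, `b := g∘d₀ − g∘d`,
`Π := (∑_{j=0}^{Q} b^j) ∘ g ∘ d + d ∘ (∑_{j=0}^{Q} b^j) ∘ g`, `Π_E := id − Π`,
`Π₀ := id − g∘d₀ − d₀∘g`, and `∂_r` defined recursively by `∂₁ := d₁` and
`∂_r := d_r − ∑_{j=1}^{r−1} d_{r−j} ∘ g ∘ ∂_j`: for every `x` with `d₀ x = 0` and
`g x = 0`, one has `Π x = ∑_{r=1}^{Q} g (∂_r x)`, and consequently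
`Π₀(d(Π_E x)) = ∑_{r=1}^{Q} ∂_r x − g(d₀(∑_{r=1}^{Q} ∂_r x)) − d₀(g(∑_{r=1}^{Q} ∂_r x))`.
(Here `∂_r x = 0` for `r > Q`, since `∂_r` raises the weight by `r`.) -/
theorem pi_and_rumin_differential_on_harmonic
    {R M : Type*} [CommRing R] [AddCommGroup M] [Module R M]
    (Mgr : ℤ × ℤ → Submodule R M)
    (hinternal : DirectSum.IsInternal Mgr)
    (s : ℕ) (D : ℕ → M →ₗ[R] M)
    (hDvan : ∀ i : ℕ, s ≤ i → D i = 0)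
    (hDdeg : ∀ (i : ℕ) (a b : ℤ), ∀ x ∈ Mgr (a, b), D i x ∈ Mgr (a + (i : ℤ), b + 1 - (i : ℤ)))
    (hDD : ∀ n : ℕ, ∑ i ∈ Finset.range (n + 1), D i ∘ₗ D (n - i) = 0)
    (Q : ℕ) (hQ : ∀ a b : ℤ, a < 0 ∨ (Q : ℤ) < a → Mgr (a, b) = ⊥)
    (d : M →ₗ[R] M) (hd : d = ∑ i ∈ Finset.range (s + 1), D i)
    (g : M →ₗ[R] M)
    (hgdeg : ∀ (a b : ℤ), ∀ x ∈ Mgr (a, b), g x ∈ Mgr (a, b - 1))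
    (hgg : g ∘ₗ g = 0)
    (hgdg : g ∘ₗ D 0 ∘ₗ g = g)
    (hdgd : D 0 ∘ₗ g ∘ₗ D 0 = D 0)
    (b : M →ₗ[R] M) (hb : b = g ∘ₗ D 0 - g ∘ₗ d)
    (Pi : M →ₗ[R] M)
    (hPi : Pi = ((∑ j ∈ Finset.range (Q + 1), b ^ j) ∘ₗ g) ∘ₗ d
        + (d ∘ₗ (∑ j ∈ Finset.range (Q + 1), b ^ j)) ∘ₗ g)
    (PiE : M →ₗ[R] M) (hPiE : PiE = LinearMap.id - Pi)
    (Pi0 : M →ₗ[R] M) (hPi0 : Pi0 = LinearMap.id - g ∘ₗ D 0 - D 0 ∘ₗ g)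
    (P : ℕ → M →ₗ[R] M) (hP1 : P 1 = D 1)
    (hPrec : ∀ r : ℕ, 2 ≤ r → P r = D r - ∑ j ∈ Finset.Ico 1 r, D (r - j) ∘ₗ (g ∘ₗ P j))
    (x : M) (hx0 : D 0 x = 0) (hxg : g x = 0) :
    (∀ r : ℕ, Q < r → P r x = 0) ∧
    Pi x = ∑ r ∈ Finset.Icc 1 Q, g (P r x) ∧
    Pi0 (d (PiE x)) = (∑ r ∈ Finset.Icc 1 Q, P r x)
        - g (D 0 (∑ r ∈ Finset.Icc 1 Q, P r x))
        - D 0 (g (∑ r ∈ Finset.Icc 1 Q, P r x)) :=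
  pi_and_rumin_differential_on_harmonic_general Mgr hinternal s D hDvan hDdeg hDD Q hQ d hd g hgdeg
    hdgd b hb Pi hPi PiE hPiE Pi0 hPi0 P hP1 hPrec x hx0 hxg
end
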